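/- arXiv:2210.16920 — 2 statements merged into one kernel-verified Lean document; each statement's English description precedes it below -/
import Mathlib

section
/- For an arbitrary countable locally standard measure algebra (H,μ), the spectrum Spec((H,μ)) is a saturated set of Steinitz numbers. -/
open scoped BigOperators

noncomputable section

/-! ### Steinitz numbers -/

/-- A Steinitz number: a formal product `∏ p ^ r_p` over all primes, with exponents
`r_p ∈ ℕ ∪ {∞}`, encoded as the function sending each prime to its exponent. -/
def SteinitzNumber : Type := Nat.Primes → ℕ∞

namespace SteinitzNumber

instance : One SteinitzNumber := ⟨fun _ => 0⟩

instance : Mul SteinitzNumber := ⟨fun s t p => s p + t p⟩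

/-- The Steinitz number associated with a positive integer `n`. -/
def ofNat (n : ℕ) : SteinitzNumber := fun p => (n.factorization p : ℕ∞)

/-- `b ∈ Ω(s)`: the positive integer `b` divides the Steinitz number `s`. -/
def NatDvd (b : ℕ) (s : SteinitzNumber) : Prop :=
  0 < b ∧ ∀ p : Nat.Primes, (b.factorization p : ℕ∞) ≤ s p

/-- The quotient `s / b` of a Steinitz number by a positive integer dividing it. -/
def divNat (s : SteinitzNumber) (b : ℕ) : SteinitzNumber :=
  fun p => s p - (b.factorization p : ℕ∞)

/-- An infinite Steinitz number is one which is not a positive integer. -/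
def Infinite (s : SteinitzNumber) : Prop := ∀ n : ℕ, s ≠ ofNat n

/-- Steinitz numbers `s` and `t` are rationally connected: `t = (a/b)·s` for positive
integers `a, b` (expressed by cross multiplication). -/
def RationallyConnected (s t : SteinitzNumber) : Prop :=
  ∃ a b : ℕ, 0 < a ∧ 0 < b ∧ ofNat b * t = ofNat a * s

/-- `s₁` finitely divides `s₂`: `s₁ = s₂ / b` for some `b ∈ Ω(s₂)`. -/
def FinDvd (s₁ s₂ : SteinitzNumber) : Prop :=
  ∃ b : ℕ, NatDvd b s₂ ∧ ofNat b * s₁ = s₂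

/-- `s₁ ≤ s₂` iff `s₁ = (a/b)·s₂` with `b ∈ Ω(s₂)` and `1 ≤ a ≤ b`. -/
def Le (s₁ s₂ : SteinitzNumber) : Prop :=
  ∃ a b : ℕ, 0 < a ∧ a ≤ b ∧ NatDvd b s₂ ∧ ofNat b * s₁ = ofNat a * s₂

/-- A saturated set of Steinitz numbers. -/
def Saturated (S : Set SteinitzNumber) : Prop :=
  (∀ s₁ ∈ S, ∀ s₂ ∈ S, RationallyConnected s₁ s₂) ∧
  (∀ s₂ ∈ S, ∀ s₁, FinDvd s₁ s₂ → s₁ ∈ S) ∧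
  (∀ s ∈ S, ∀ n : ℕ, ofNat n * s ∈ S → ∀ k : ℕ, 1 ≤ k → k ≤ n → ofNat k * s ∈ S)

/-- `S(∞, s) = { (a/b)·s : a ∈ ℕ, b ∈ Ω(s) }`. -/
def SInf (s : SteinitzNumber) : Set SteinitzNumber :=
  {t | ∃ a b : ℕ, 0 < a ∧ NatDvd b s ∧ ofNat b * t = ofNat a * s}

/-- `S(r, s) = { (a/b)·s : a, b ∈ ℕ, b ∈ Ω(s), a ≤ r·b }`. -/
def SBdd (r : ℝ) (s : SteinitzNumber) : Set SteinitzNumber :=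
  {t | ∃ a b : ℕ, 0 < a ∧ NatDvd b s ∧ (a : ℝ) ≤ r * b ∧ ofNat b * t = ofNat a * s}

/-- `S⁺(r, s) = { (a/b)·s : a, b ∈ ℕ, b ∈ Ω(s), a < r·b }`. -/
def SBddPlus (r : ℝ) (s : SteinitzNumber) : Set SteinitzNumber :=
  {t | ∃ a b : ℕ, 0 < a ∧ NatDvd b s ∧ (a : ℝ) < r * b ∧ ofNat b * t = ofNat a * s}

end SteinitzNumber

/-! ### Measure algebras -/

/-- A measure algebra: a Boolean algebra (an associative, commutative algebra over `𝔽₂`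
in which every element is idempotent) equipped with a measure `μ` which is positive on
nonzero elements and additive on orthogonal pairs. -/
structure MeasureAlgebra : Type 1 where
  carrier : Type
  [ring : NonUnitalCommRing carrier]
  idem : ∀ x : carrier, x * x = x
  mu : carrier → ℝ
  mu_nonneg : ∀ a, 0 ≤ mu a
  mu_eq_zero_iff : ∀ a, mu a = 0 ↔ a = 0
  mu_add : ∀ a b : carrier, a * b = 0 → mu (a + b) = mu a + mu b

attribute [instance] MeasureAlgebra.ring

namespace MeasureAlgebra

/-- Isomorphism of measure algebras: a Boolean algebra isomorphism preserving the measures. -/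
def Isomorphic (H₁ H₂ : MeasureAlgebra) : Prop :=
  ∃ φ : H₁.carrier ≃+* H₂.carrier, ∀ a, H₂.mu (φ a) = H₁.mu a

/-- Scalar equivalence of measure algebras: a Boolean algebra isomorphism multiplying
the measure by a positive constant `α`. -/
def ScalarEquivalent (H₁ H₂ : MeasureAlgebra) : Prop :=
  ∃ α : ℝ, 0 < α ∧ ∃ φ : H₁.carrier ≃+* H₂.carrier, ∀ a, H₂.mu (φ a) = α * H₁.mu a

/-- The measure subalgebra of a measure algebra supported on a subring, with the
restricted measure. -/
def restrict (H : MeasureAlgebra) (S : NonUnitalSubring H.carrier) : MeasureAlgebra where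
  carrier := S
  idem := fun x => Subtype.ext (H.idem x.1)
  mu := fun x => H.mu x.1
  mu_nonneg := fun a => H.mu_nonneg a.1
  mu_eq_zero_iff := fun a => by
    rw [H.mu_eq_zero_iff a.1]
    exact ⟨fun h => Subtype.ext h, fun h => congrArg Subtype.val h⟩
  mu_add := fun a b hab => H.mu_add a.1 b.1 (congrArg Subtype.val hab)

/-- The standard measure algebra `Stₙ = 𝔽₂ⁿ` with `μ(x₁, …, xₙ) = (x₁ + ⋯ + xₙ)/n`. -/
def St (n : ℕ) : MeasureAlgebra where
  carrier := Fin n → ZMod 2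
  idem := fun x => funext fun i => by
    have h : ∀ a : ZMod 2, a * a = a := by decide
    exact h (x i)
  mu := fun x => (∑ i, ((x i).val : ℝ)) / n
  mu_nonneg := fun a => by positivity
  mu_eq_zero_iff := fun a => by
    constructor
    · intro h
      rcases Nat.eq_zero_or_pos n with hn | hn
      · subst hn; exact funext fun i => i.elim0
      · have hne : ((n : ℝ)) ≠ 0 := by positivity
        have h2 : (∑ i, ((a i).val : ℝ)) = 0 := by
          rcases div_eq_zero_iff.mp h with h' | h'
          · exact h'
          · exact absurd h' hne
        have h3 := (Finset.sum_eq_zero_iff_of_nonneg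
          (fun i _ => by positivity : ∀ i ∈ Finset.univ, (0:ℝ) ≤ ((a i).val : ℝ))).mp h2
        funext i
        have h4 : ((a i).val : ℝ) = 0 := h3 i (Finset.mem_univ i)
        have h5 : (a i).val = 0 := by exact_mod_cast h4
        exact (ZMod.val_eq_zero _).mp h5
    · intro h; subst h; simp
  mu_add := fun a b hab => by
    have key : ∀ u v : ZMod 2, u * v = 0 → (u + v).val = u.val + v.val := by decide
    have h : ∀ i, (((a + b) i).val : ℝ) = ((a i).val : ℝ) + ((b i).val : ℝ) := by
      intro i
      have h0 : a i * b i = 0 := congrFun hab i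
      have h1 := key (a i) (b i) h0
      show (((a i + b i)).val : ℝ) = _
      rw [h1]
      push_cast
      ring
    show (∑ i, (((a + b) i).val : ℝ)) / n
        = (∑ i, ((a i).val : ℝ)) / n + (∑ i, ((b i).val : ℝ)) / n
    rw [← add_div, ← Finset.sum_add_distrib]
    congr 1
    exact Finset.sum_congr rfl fun i _ => h i

/-- A measure algebra is unital if it has an identity element of measure `1`. -/
def Unital (H : MeasureAlgebra) : Prop :=
  ∃ e : H.carrier, (∀ x, e * x = x) ∧ H.mu e = 1

/-- A measure algebra is locally standard if every finite subset is contained in a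
measure subalgebra scalar equivalent to a standard one. -/
def LocallyStandard (H : MeasureAlgebra) : Prop :=
  ∀ t : Finset H.carrier, ∃ (S : NonUnitalSubring H.carrier) (n : ℕ), 0 < n ∧
    (↑t : Set H.carrier) ⊆ S ∧ (H.restrict S).ScalarEquivalent (St n)

/-- For an (idempotent) element `h`, the subring `hH = {x | h·x = x}`. -/
def cornerSubring (H : MeasureAlgebra) (h : H.carrier) : NonUnitalSubring H.carrier where
  carrier := {x | h * x = x}
  zero_mem' := mul_zero h
  add_mem' := by
    intro a b ha hb
    simp only [Set.mem_setOf_eq] at *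
    rw [mul_add, ha, hb]
  neg_mem' := by
    intro a ha
    simp only [Set.mem_setOf_eq] at *
    rw [mul_neg, ha]
  mul_mem' := by
    intro a b ha hb
    simp only [Set.mem_setOf_eq] at *
    rw [← mul_assoc, ha]

/-- The unital measure algebra `H_h = (hH, μ(·)/μ(h))`. -/
def corner (H : MeasureAlgebra) (h : H.carrier) : MeasureAlgebra where
  carrier := H.cornerSubring h
  idem := fun x => Subtype.ext (H.idem x.1)
  mu := fun x => H.mu x.1 / H.mu h
  mu_nonneg := fun a => div_nonneg (H.mu_nonneg a.1) (H.mu_nonneg h)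
  mu_eq_zero_iff := fun a => by
    constructor
    · intro ha
      rcases div_eq_zero_iff.mp ha with h' | h'
      · exact Subtype.ext ((H.mu_eq_zero_iff a.1).mp h')
      · have hh : h = 0 := (H.mu_eq_zero_iff h).mp h'
        have h2 : h * (a : H.carrier) = a := a.2
        apply Subtype.ext
        show (a : H.carrier) = 0
        generalize hx : (a : H.carrier) = x at h2 ⊢
        rw [← h2, hh, zero_mul]
    · intro h'
      subst h'
      have h0 : H.mu ((0 : H.cornerSubring h) : H.carrier) = 0 :=
        (H.mu_eq_zero_iff _).mpr rfl
      show H.mu ((0 : H.cornerSubring h) : H.carrier) / H.mu h = 0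
      rw [h0, zero_div]
  mu_add := fun a b hab => by
    have : H.mu ((a : H.carrier) + b) = H.mu a + H.mu b :=
      H.mu_add a.1 b.1 (congrArg Subtype.val hab)
    show H.mu ((a + b : H.cornerSubring h) : H.carrier) / H.mu h = _
    rw [show ((a + b : H.cornerSubring h) : H.carrier) = (a : H.carrier) + b from rfl,
      this, add_div]

/-- `D(H)`: the set of `n` such that `H` has a subalgebra containing the identity of `H`
and isomorphic to the standard measure algebra `Stₙ`. -/
def D (H : MeasureAlgebra) : Set ℕ :=
  {n | ∃ S : NonUnitalSubring H.carrier,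
    (∃ e ∈ S, ∀ x : H.carrier, e * x = x) ∧ (H.restrict S).Isomorphic (St n)}

/-- The Steinitz number `st(H)` of a (unital locally standard) measure algebra:
the least common multiple of `D(H)`. -/
def st (H : MeasureAlgebra) : SteinitzNumber :=
  fun p => ⨆ n ∈ H.D, (n.factorization p : ℕ∞)

/-- The spectrum of a measure algebra: the set of Steinitz numbers `st(H_h)` for `h ≠ 0`. -/
def Spec (H : MeasureAlgebra) : Set SteinitzNumber :=
  {s | ∃ h : H.carrier, h ≠ 0 ∧ (H.corner h).st = s}

end MeasureAlgebra

/-!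
For `h ≠ 0`, `st(H_h)` is the least common multiple of the `n` for which `h` splits into `n`
pairwise orthogonal pieces of equal measure. Local standardness puts finitely many elements
inside a scaled copy of some `St_N`, where each of them is a sum of atoms of one common measure;
there `h` splits into `d` equal pieces as soon as `d` divides its number of atoms, and measures
are proportional to atom counts. Consequently `b·μ(h₁) = a·μ(h₂)` forces
`a·st(H_{h₂}) = b·st(H_{h₁})`, and every `b ∈ Ω(st(H_h))` is realised by a splitting of `h`.
The three saturation properties follow by applying this to sums of `k` of the `n` pieces of an
element.
-/

lemma ZMod.eq_zero_or_eq_one_of_two (a : ZMod 2) : a = 0 ∨ a = 1 := by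
  revert a
  decide

namespace MeasureAlgebra

section Basic

variable {M : MeasureAlgebra}

lemma add_self (x : M.carrier) : x + x = 0 := by
  have h : (x + x) * (x + x) = (x + x) + (x + x) := by rw [mul_add, add_mul, M.idem]
  rw [M.idem] at h
  simpa using h

lemma mu_zero : M.mu 0 = 0 := (M.mu_eq_zero_iff 0).2 rfl

lemma mu_pos {x : M.carrier} (hx : x ≠ 0) : 0 < M.mu x :=
  (M.mu_nonneg x).lt_of_ne' (mt (M.mu_eq_zero_iff x).1 hx)

lemma mu_sum {ι : Type*} (s : Finset ι) (f : ι → M.carrier)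
    (hf : (s : Set ι).Pairwise fun i j => f i * f j = 0) :
    M.mu (∑ i ∈ s, f i) = ∑ i ∈ s, M.mu (f i) := by
  classical
  induction s using Finset.induction_on with
  | empty => simp [mu_zero]
  | insert a s ha ih =>
    rw [Finset.coe_insert] at hf
    rw [Finset.sum_insert ha, Finset.sum_insert ha, M.mu_add, ih (hf.mono (Set.subset_insert _ _))]
    rw [Finset.mul_sum]
    exact Finset.sum_eq_zero fun j hj => hf (Set.mem_insert _ _) (Set.mem_insert_of_mem _ hj)
      (ne_of_mem_of_not_mem hj ha).symm

lemma nsmul_val_add (a b : ZMod 2) (x : M.carrier) :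
    (a + b).val • x = a.val • x + b.val • x := by
  have h : (1 + 1 : ZMod 2) = 0 := rfl
  rcases a.eq_zero_or_eq_one_of_two with rfl | rfl <;>
    rcases b.eq_zero_or_eq_one_of_two with rfl | rfl <;> simp [h, ZMod.val_one, add_self]

lemma nsmul_val_mul_nsmul_val (a b : ZMod 2) (x : M.carrier) :
    a.val • x * b.val • x = (a * b).val • x := by
  rcases a.eq_zero_or_eq_one_of_two with rfl | rfl <;>
    rcases b.eq_zero_or_eq_one_of_two with rfl | rfl <;> simp [M.idem, ZMod.val_one]

lemma mu_nsmul_val (a : ZMod 2) (x : M.carrier) : M.mu (a.val • x) = a.val * M.mu x := by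
  rcases a.eq_zero_or_eq_one_of_two with rfl | rfl <;> simp [mu_zero, ZMod.val_one]

def IsDivisible (M : MeasureAlgebra) (x : M.carrier) (n : ℕ) : Prop :=
  ∃ f : Fin n → M.carrier, Pairwise (fun i j => f i * f j = 0) ∧ ∑ i, f i = x ∧
    ∀ i, M.mu (f i) = M.mu x / n

lemma isDivisible_one (x : M.carrier) : M.IsDivisible x 1 :=
  ⟨fun _ => x, fun i j hij => absurd (Subsingleton.elim i j) hij, by simp, by simp⟩

lemma IsDivisible.ne_zero {x : M.carrier} {n : ℕ} (hn : M.IsDivisible x n) (hx : x ≠ 0) :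
    n ≠ 0 := by
  rintro rfl
  obtain ⟨f, -, hsum, -⟩ := hn
  exact hx (by simpa using hsum.symm)

lemma IsDivisible.exists_mu_eq {x : M.carrier} {n k : ℕ} (hn : M.IsDivisible x n)
    (hk : k ≤ n) : ∃ y, n * M.mu y = k * M.mu x := by
  obtain ⟨f, horth, -, hμ⟩ := hn
  refine ⟨∑ i : Fin k, f (Fin.castLE hk i), ?_⟩
  rw [mu_sum _ _ fun i _ j _ hij => horth ((Fin.castLE_injective hk).ne hij)]
  simp only [hμ, Finset.sum_const, Finset.card_univ, Fintype.card_fin, nsmul_eq_mul]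
  rcases Nat.eq_zero_or_pos n with rfl | hn
  · simp [Nat.le_zero.1 hk]
  · field_simp

lemma mul_eq_of_sum_eq {n : ℕ} {f : Fin n → M.carrier} (hf : Pairwise fun i j => f i * f j = 0)
    {x : M.carrier} (hx : ∑ i, f i = x) (i : Fin n) : x * f i = f i := by
  rw [← hx, Finset.sum_mul, Finset.sum_eq_single i (fun j _ hji => hf hji) (by simp), M.idem]

end Basic

namespace St

variable {n : ℕ}

def single (i : Fin n) : (St n).carrier := Pi.single (M := fun _ => ZMod 2) i 1

lemma single_mul_single {i j : Fin n} (hij : i ≠ j) : single i * single j = 0 := by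
  funext k
  show Pi.single (M := fun _ => ZMod 2) i 1 k * Pi.single (M := fun _ => ZMod 2) j 1 k = 0
  by_cases hk : k = i
  · subst hk
    simp [hij]
  · simp [hk]

lemma mu_single (i : Fin n) : (St n).mu (single i) = 1 / n := by
  show (∑ k, ((Pi.single (M := fun _ => ZMod 2) i 1 k).val : ℝ)) / n = 1 / n
  simp [Pi.single_apply, apply_ite, ZMod.val_one]

lemma sum_single_mul (x : (St n).carrier) : (∑ i, single i) * x = x := by
  have h : ∑ i, single i = (fun _ => 1 : Fin n → ZMod 2) :=
    Finset.univ_sum_single (M := fun _ => ZMod 2) _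
  rw [h]
  funext k
  exact one_mul (x k)

lemma exists_sum_single_eq (x : Fin n → ZMod 2) :
    ∃ s : Finset (Fin n), ∑ i ∈ s, single i = x := by
  classical
  refine ⟨Finset.univ.filter (x · ≠ 0), ?_⟩
  show ∑ i ∈ Finset.univ.filter (x · ≠ 0), Pi.single (M := fun _ => ZMod 2) i 1 = x
  funext k
  rw [Finset.sum_apply]
  simp only [Pi.single_apply]
  rcases (x k).eq_zero_or_eq_one_of_two with h | h <;> simp [h]

end St

section Atoms

variable {M : MeasureAlgebra} {S : NonUnitalSubring M.carrier} {n : ℕ}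

def atom (φ : (M.restrict S).carrier ≃+* (St n).carrier) (i : Fin n) : M.carrier :=
  (φ.symm (St.single i)).1

variable (φ : (M.restrict S).carrier ≃+* (St n).carrier)

lemma atom_mul_atom {i j : Fin n} (hij : i ≠ j) : atom φ i * atom φ j = 0 := by
  show (φ.symm (St.single i) * φ.symm (St.single j)).1 = 0
  rw [← map_mul, St.single_mul_single hij, map_zero]
  rfl

lemma mu_atom {α : ℝ} (hφ : ∀ a, (St n).mu (φ a) = α * (M.restrict S).mu a) (i : Fin n) :
    α * M.mu (atom φ i) = 1 / n := by
  have h := hφ (φ.symm (St.single i))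
  rw [φ.apply_symm_apply, St.mu_single] at h
  exact h.symm

lemma sum_atom (s : Finset (Fin n)) :
    ∑ i ∈ s, atom φ i = (φ.symm (∑ i ∈ s, St.single i)).1 := by
  rw [map_sum]
  exact (map_sum S.subtype _ s).symm

end Atoms

section SumsOfAtoms

variable {M : MeasureAlgebra} {ι : Type*} {e : ι → M.carrier}
  (he : Pairwise fun i j => e i * e j = 0) {β : ℝ} (heμ : ∀ i, M.mu (e i) = β)
include he heμ

lemma mu_sum_atoms (s : Finset ι) : M.mu (∑ i ∈ s, e i) = s.card * β := by
  rw [mu_sum s e fun i _ j _ hij => he hij]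
  simp [heμ]

lemma isDivisible_sum_atoms {s : Finset ι} {d q : ℕ} (hs : s.card = d * q) :
    M.IsDivisible (∑ i ∈ s, e i) d := by
  let σ : Fin d × Fin q ≃ s := finProdFinEquiv.trans ((finCongr hs.symm).trans s.equivFin.symm)
  have hσ : Function.Injective fun p => (σ p : ι) := Subtype.val_injective.comp σ.injective
  refine ⟨fun j => ∑ r, e (σ (j, r)), fun j k hjk => ?_, ?_, fun j => ?_⟩
  · show (∑ r, e (σ (j, r))) * ∑ r, e (σ (k, r)) = 0
    rw [Finset.sum_mul_sum]
    exact Finset.sum_eq_zero fun r _ => Finset.sum_eq_zero fun r' _ =>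
      he (hσ.ne fun h => hjk (Prod.ext_iff.1 h).1)
  · rw [← Fintype.sum_prod_type', Equiv.sum_comp σ (fun i => e i), Finset.sum_coe_sort]
  · have hd : (d : ℝ) ≠ 0 := by exact_mod_cast (Fin.pos j).ne'
    rw [mu_sum _ _ fun r _ r' _ hr => he (hσ.ne fun h => hr (Prod.ext_iff.1 h).2),
      mu_sum_atoms he heμ, hs]
    simp [heμ]
    field_simp

end SumsOfAtoms

section LocallyStandard

variable {M : MeasureAlgebra} (hls : M.LocallyStandard)
include hls

lemma exists_atoms (t : Finset M.carrier) :
    ∃ (N : ℕ) (e : Fin N → M.carrier) (β : ℝ), 0 < β ∧ Pairwise (fun i j => e i * e j = 0) ∧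
      (∀ i, M.mu (e i) = β) ∧ ∀ x ∈ t, ∃ s : Finset (Fin N), ∑ i ∈ s, e i = x := by
  obtain ⟨S, n, hn, hsub, α, hα, φ, hφ⟩ := hls t
  refine ⟨n, atom φ, 1 / (α * n), by positivity, fun i j => atom_mul_atom φ, fun i => ?_,
    fun x hx => ?_⟩
  · have h := mu_atom φ hφ i
    field_simp at h ⊢
    linarith
  · obtain ⟨s, hs⟩ := St.exists_sum_single_eq (φ ⟨x, hsub hx⟩)
    refine ⟨s, ?_⟩
    rw [sum_atom, hs]
    exact congrArg Subtype.val (φ.symm_apply_apply _)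

-- `c x` is the number of atoms of a standard chart under `x`.
lemma exists_count (t : Finset M.carrier) :
    ∃ (β : ℝ) (c : M.carrier → ℕ), 0 < β ∧
      ∀ x ∈ t, M.mu x = β * c x ∧ ∀ d, d ∣ c x → M.IsDivisible x d := by
  obtain ⟨N, e, β, hβ, he, heμ, hspan⟩ := exists_atoms hls t
  choose! s hs using hspan
  refine ⟨β, fun x => (s x).card, hβ, fun x hx => ⟨?_, ?_⟩⟩
  · rw [mul_comm, ← mu_sum_atoms he heμ, hs x hx]
  · rintro d ⟨q, hq⟩
    rw [← hs x hx]
    exact isDivisible_sum_atoms he heμ hq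

end LocallyStandard

section Unital

variable {M : MeasureAlgebra} {n : ℕ}

def embedSt (f : Fin n → M.carrier) (hf : Pairwise fun i j => f i * f j = 0) :
    (St n).carrier →ₙ+* M.carrier where
  toFun x := ∑ i, ((x : Fin n → ZMod 2) i).val • f i
  map_zero' := Finset.sum_eq_zero fun i _ => zero_smul ℕ (f i)
  map_add' x y := by
    rw [← Finset.sum_add_distrib]
    exact Finset.sum_congr rfl fun i _ => nsmul_val_add _ _ (f i)
  map_mul' x y := by
    rw [Finset.sum_mul_sum]
    refine Finset.sum_congr rfl fun i _ => ?_
    rw [Finset.sum_eq_single i (fun j _ hji => by rw [smul_mul_smul_comm, hf hji.symm, smul_zero])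
      (by simp)]
    exact (nsmul_val_mul_nsmul_val _ _ _).symm

lemma mu_embedSt {f : Fin n → M.carrier} (hf : Pairwise fun i j => f i * f j = 0) {r : ℝ}
    (hμ : ∀ i, M.mu (f i) = r / n) (x : (St n).carrier) :
    M.mu (embedSt f hf x) = r * (St n).mu x := by
  show M.mu (∑ i : Fin n, _) = r * ((∑ i, (((x : Fin n → ZMod 2) i).val : ℝ)) / n)
  rw [mu_sum _ _ fun i _ j _ hij => by beta_reduce; rw [smul_mul_smul_comm, hf hij, smul_zero]]
  simp only [mu_nsmul_val, hμ]
  rw [← Finset.sum_mul]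
  ring

lemma embedSt_single {f : Fin n → M.carrier} (hf : Pairwise fun i j => f i * f j = 0)
    (i : Fin n) : embedSt f hf (St.single i) = f i := by
  show ∑ j, (Pi.single (M := fun _ => ZMod 2) i 1 j).val • f j = f i
  rw [Finset.sum_eq_single i (fun j _ hji => by simp [hji]) (by simp)]
  simp [ZMod.val_one]

variable {e : M.carrier} (he : ∀ x, e * x = x) (heμ : M.mu e = 1)
include he heμ

lemma isDivisible_of_mem_D (hn : n ∈ M.D) : M.IsDivisible e n := by
  obtain ⟨S, ⟨u, huS, hu⟩, φ, hφ⟩ := hn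
  have hunit : (φ.symm (∑ i, St.single i)).1 = e := by
    have h1 : φ.symm (∑ i, St.single i) * ⟨u, huS⟩ = ⟨u, huS⟩ :=
      φ.injective ((map_mul φ _ _).trans (by rw [φ.apply_symm_apply, St.sum_single_mul]))
    calc (φ.symm (∑ i, St.single i)).1 = u * (φ.symm (∑ i, St.single i)).1 := (hu _).symm
      _ = u := by rw [mul_comm]; exact congrArg Subtype.val h1
      _ = e := by rw [← he u, mul_comm, hu]
  refine ⟨atom φ, fun i j => atom_mul_atom φ, by rw [sum_atom, hunit], fun i => ?_⟩
  have h := mu_atom φ (α := 1) (fun a => by rw [hφ a, one_mul]) i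
  rw [one_mul] at h
  rw [h, heμ]

lemma mem_D_of_isDivisible (hn : M.IsDivisible e n) : n ∈ M.D := by
  obtain ⟨f, hf, hsum, hfμ⟩ := hn
  set ψ := embedSt f hf
  have hψμ : ∀ x, M.mu (ψ x) = (St n).mu x := fun x => by
    rw [mu_embedSt hf hfμ, heμ, one_mul]
  have hψ : Function.Injective ψ := (injective_iff_map_eq_zero ψ).2 fun x hx =>
    ((St n).mu_eq_zero_iff x).1 (by rw [← hψμ, hx, mu_zero])
  have hψ1 : ψ (∑ i, St.single i) = e := by
    simp only [map_sum, ψ, embedSt_single, hsum]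
  let E := RingEquiv.ofBijective ψ.rangeRestrict
    ⟨fun x y h => hψ (congrArg Subtype.val h), ψ.rangeRestrict_surjective⟩
  refine ⟨ψ.range, ⟨e, hψ1 ▸ ψ.mem_range_self _, he⟩, E.symm, fun a => ?_⟩
  obtain ⟨x, rfl⟩ := E.surjective a
  exact (congrArg (St n).mu (E.symm_apply_apply x)).trans (hψμ x).symm

end Unital

section Corner

variable {H : MeasureAlgebra}

lemma isDivisible_corner_iff {h : H.carrier} (hh : h ≠ 0) {n : ℕ} :
    (H.corner h).IsDivisible ⟨h, H.idem h⟩ n ↔ H.IsDivisible h n := by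
  have hμh := (mu_pos hh).ne'
  constructor
  · rintro ⟨f, hf, hsum, hμ⟩
    refine ⟨fun i => (f i).1, fun i j hij => congrArg Subtype.val (hf hij),
      (map_sum (H.cornerSubring h).subtype f Finset.univ).symm.trans (congrArg Subtype.val hsum),
      fun i => ?_⟩
    have hi := hμ i
    change H.mu (f i).1 / H.mu h = H.mu h / H.mu h / n at hi
    rwa [div_self hμh, div_eq_iff hμh, one_div, ← div_eq_inv_mul] at hi
  · rintro ⟨f, hf, hsum, hμ⟩
    refine ⟨fun i => ⟨f i, mul_eq_of_sum_eq hf hsum i⟩, fun i j hij => Subtype.ext (hf hij),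
      Subtype.ext ((map_sum (H.cornerSubring h).subtype _ Finset.univ).trans hsum), fun i => ?_⟩
    show H.mu (f i) / H.mu h = H.mu h / H.mu h / n
    rw [hμ i, div_right_comm]

lemma D_corner {h : H.carrier} (hh : h ≠ 0) : (H.corner h).D = {n | H.IsDivisible h n} := by
  have he : ∀ x : (H.corner h).carrier, ⟨h, H.idem h⟩ * x = x := fun x => Subtype.ext x.2
  have heμ : (H.corner h).mu ⟨h, H.idem h⟩ = 1 := div_self (mu_pos hh).ne'
  ext n
  exact ⟨fun hn => (isDivisible_corner_iff hh).1 (isDivisible_of_mem_D he heμ hn),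
    fun hn => mem_D_of_isDivisible he heμ ((isDivisible_corner_iff hh).2 hn)⟩

end Corner

end MeasureAlgebra

namespace SteinitzNumber

def lcmOf (D : Set ℕ) : SteinitzNumber := fun p => ⨆ n ∈ D, (n.factorization p : ℕ∞)

lemma ofNat_one_mul (s : SteinitzNumber) : ofNat 1 * s = s :=
  funext fun p => by
    show ((1 : ℕ).factorization p : ℕ∞) + s p = s p
    simp

protected lemma mul_left_comm (s t u : SteinitzNumber) : s * (t * u) = t * (s * u) :=
  funext fun p => add_left_comm (s p) (t p) (u p)

lemma ofNat_mul_left_cancel {c : ℕ} {s t : SteinitzNumber} (h : ofNat c * s = ofNat c * t) :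
    s = t :=
  funext fun p => WithTop.add_left_cancel (ENat.natCast_ne_top _) (congrFun h p)

lemma natDvd_ofNat_mul {n : ℕ} (hn : 0 < n) (s : SteinitzNumber) : NatDvd n (ofNat n * s) :=
  ⟨hn, fun _ => le_self_add⟩

lemma exists_finset_dvd_lcm_of_natDvd {D : Set ℕ} (hD : 0 ∉ D) {b : ℕ}
    (hb : NatDvd b (lcmOf D)) : ∃ u : Finset ℕ, ↑u ⊆ D ∧ b ∣ u.lcm id := by
  classical
  obtain ⟨hb0, hb⟩ := hb
  have hchoice : ∀ p ∈ b.primeFactors, ∃ n ∈ D, b.factorization p ≤ n.factorization p := by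
    intro p hp
    have hpos : b.factorization p ≠ 0 :=
      Finsupp.mem_support_iff.1 (by rwa [Nat.support_factorization])
    have hlt : ((b.factorization p - 1 : ℕ) : ℕ∞) < ⨆ n ∈ D, (n.factorization p : ℕ∞) :=
      lt_of_lt_of_le (by exact_mod_cast Nat.sub_one_lt hpos)
        (hb ⟨p, Nat.prime_of_mem_primeFactors hp⟩)
    obtain ⟨n, hn, hlt⟩ := lt_biSup_iff.1 hlt
    exact ⟨n, hn, by have := ENat.natCast_lt_natCast.1 hlt; omega⟩
  choose! N hND hN using hchoice
  have hL : (b.primeFactors.image N).lcm id ≠ 0 := by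
    rw [Ne, Finset.lcm_eq_zero_iff]
    rintro ⟨n, hn, rfl⟩
    obtain ⟨p, hp, hpn⟩ := Finset.mem_image.1 hn
    exact hD (hpn ▸ hND p hp)
  refine ⟨b.primeFactors.image N, fun n hn => ?_, ?_⟩
  · obtain ⟨p, hp, rfl⟩ := Finset.mem_image.1 (Finset.mem_coe.1 hn)
    exact hND p hp
  rw [← Nat.factorization_prime_le_iff_dvd hb0.ne' hL]
  intro p _
  by_cases hpb : p ∈ b.primeFactors
  · have hNp : N p ∣ (b.primeFactors.image N).lcm id :=
      Finset.dvd_lcm (Finset.mem_image_of_mem N hpb)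
    exact (hN p hpb).trans
      ((Nat.factorization_le_iff_dvd (ne_of_mem_of_not_mem (hND p hpb) hD) hL).2 hNp p)
  · rw [← Nat.support_factorization, Finsupp.notMem_support_iff] at hpb
    simp [hpb]

lemma ofNat_mul_lcmOf_le {a b : ℕ} (ha : a ≠ 0) (hb : b ≠ 0) {D₁ D₂ : Set ℕ} (hD₁ : 0 ∉ D₁)
    (hD₂ : D₂.Nonempty) (h : ∀ n ∈ D₂, ∃ m ∈ D₁, a * n ∣ b * m) (p : Nat.Primes) :
    (ofNat a * lcmOf D₂) p ≤ (ofNat b * lcmOf D₁) p := by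
  show (a.factorization p : ℕ∞) + ⨆ n ∈ D₂, (n.factorization p : ℕ∞) ≤
    (b.factorization p : ℕ∞) + ⨆ m ∈ D₁, (m.factorization p : ℕ∞)
  rw [ENat.add_biSup hD₂]
  refine iSup₂_le fun n hn => ?_
  obtain ⟨m, hm, hdvd⟩ := h n hn
  have hbm : b * m ≠ 0 := mul_ne_zero hb (ne_of_mem_of_not_mem hm hD₁)
  have han : a * n ≠ 0 := fun h0 => hbm (zero_dvd_iff.1 (h0 ▸ hdvd))
  have key := (Nat.factorization_le_iff_dvd han hbm).2 hdvd p
  rw [Nat.factorization_mul ha (right_ne_zero_of_mul han),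
    Nat.factorization_mul hb (ne_of_mem_of_not_mem hm hD₁)] at key
  calc (a.factorization p : ℕ∞) + n.factorization p ≤ b.factorization p + m.factorization p := by
        exact_mod_cast key
    _ ≤ _ := by gcongr; exact le_iSup₂ (f := fun m _ => (m.factorization p : ℕ∞)) m hm

end SteinitzNumber

namespace MeasureAlgebra

open SteinitzNumber

variable {H : MeasureAlgebra}

lemma st_corner {h : H.carrier} (hh : h ≠ 0) :
    (H.corner h).st = lcmOf {n | H.IsDivisible h n} := by
  rw [← D_corner hh]
  rfl

lemma natCast_mul_eq_of_mu {β : ℝ} (hβ : 0 < β) {x y : H.carrier} {cx cy a b : ℕ}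
    (hx : H.mu x = β * cx) (hy : H.mu y = β * cy) (h : a * H.mu x = b * H.mu y) :
    a * cx = b * cy := by
  rw [hx, hy] at h
  have h' : ((a * cx : ℕ) : ℝ) = (b * cy : ℕ) := by
    push_cast
    exact mul_left_cancel₀ hβ.ne' (by linear_combination h)
  exact_mod_cast h'

variable (hls : H.LocallyStandard)
include hls

lemma exists_mul_mu_eq_mul_mu {h₁ h₂ : H.carrier} (hh₁ : h₁ ≠ 0) (hh₂ : h₂ ≠ 0) :
    ∃ a b : ℕ, a ≠ 0 ∧ b ≠ 0 ∧ b * H.mu h₁ = a * H.mu h₂ := by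
  classical
  obtain ⟨β, c, hβ, hc⟩ := exists_count hls {h₁, h₂}
  have hc₁ := (hc h₁ (by simp)).1
  have hc₂ := (hc h₂ (by simp)).1
  refine ⟨c h₁, c h₂, fun h0 => ?_, fun h0 => ?_, by rw [hc₁, hc₂]; ring⟩
  · exact (mu_pos hh₁).ne' (by simp [hc₁, h0])
  · exact (mu_pos hh₂).ne' (by simp [hc₂, h0])

lemma isDivisible_of_dvd_finset_lcm {h : H.carrier} (hh : h ≠ 0) {u : Finset ℕ}
    (hu : ∀ n ∈ u, H.IsDivisible h n) {b : ℕ} (hb : b ∣ u.lcm id) : H.IsDivisible h b := by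
  classical
  choose! y hy using fun n hn =>
    (hu n hn).exists_mu_eq (Nat.one_le_iff_ne_zero.2 ((hu n hn).ne_zero hh))
  obtain ⟨β, c, hβ, hc⟩ := exists_count hls (insert h (u.image y))
  obtain ⟨hch, hdiv⟩ := hc h (Finset.mem_insert_self _ _)
  refine hdiv b (hb.trans (Finset.lcm_dvd fun n hn => ⟨c (y n), ?_⟩))
  have hcy := (hc (y n) (Finset.mem_insert_of_mem (Finset.mem_image_of_mem y hn))).1
  simpa using (natCast_mul_eq_of_mu hβ hcy hch (hy n hn)).symm

lemma isDivisible_of_natDvd_st_corner {h : H.carrier} (hh : h ≠ 0) {b : ℕ}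
    (hb : NatDvd b (H.corner h).st) : H.IsDivisible h b := by
  rw [st_corner hh] at hb
  obtain ⟨u, hu, hbu⟩ := exists_finset_dvd_lcm_of_natDvd (fun h0 => h0.ne_zero hh rfl) hb
  exact isDivisible_of_dvd_finset_lcm hls hh (fun n hn => hu hn) hbu

lemma exists_isDivisible_mul_dvd_mul {h₁ h₂ : H.carrier} (hh₂ : h₂ ≠ 0) {a b n : ℕ}
    (hμ : b * H.mu h₁ = a * H.mu h₂) (hn : H.IsDivisible h₂ n) :
    ∃ m, H.IsDivisible h₁ m ∧ a * n ∣ b * m := by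
  classical
  obtain ⟨y, hy⟩ := hn.exists_mu_eq (Nat.one_le_iff_ne_zero.2 (hn.ne_zero hh₂))
  obtain ⟨β, c, hβ, hc⟩ := exists_count hls {h₁, h₂, y}
  obtain ⟨hc₁, hdiv₁⟩ := hc h₁ (by simp)
  have hc₂ := (hc h₂ (by simp)).1
  have hcy := (hc y (by simp)).1
  refine ⟨c h₁, hdiv₁ _ dvd_rfl, c y, ?_⟩
  have e₁ := natCast_mul_eq_of_mu hβ hcy hc₂ hy
  have e₂ := natCast_mul_eq_of_mu hβ hc₁ hc₂ hμ
  rw [e₂, ← one_mul (c h₂), ← e₁]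
  ring

lemma ofNat_mul_st_corner_eq {h₁ h₂ : H.carrier} (hh₁ : h₁ ≠ 0) (hh₂ : h₂ ≠ 0) {a b : ℕ}
    (ha : a ≠ 0) (hb : b ≠ 0) (hμ : b * H.mu h₁ = a * H.mu h₂) :
    ofNat a * (H.corner h₂).st = ofNat b * (H.corner h₁).st := by
  rw [st_corner hh₁, st_corner hh₂]
  funext p
  exact le_antisymm
    (ofNat_mul_lcmOf_le ha hb (fun h0 => IsDivisible.ne_zero h0 hh₁ rfl) ⟨1, isDivisible_one h₂⟩
      (fun n hn => exists_isDivisible_mul_dvd_mul hls hh₂ hμ hn) p)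
    (ofNat_mul_lcmOf_le hb ha (fun h0 => IsDivisible.ne_zero h0 hh₂ rfl) ⟨1, isDivisible_one h₁⟩
      (fun n hn => exists_isDivisible_mul_dvd_mul hls hh₁ hμ.symm hn) p)

lemma exists_ofNat_mul_st_corner_eq {g : H.carrier} (hg : g ≠ 0) {n k : ℕ}
    (hn : NatDvd n (H.corner g).st) (hk : 0 < k) (hkn : k ≤ n) :
    ∃ x ≠ 0, ofNat n * (H.corner x).st = ofNat k * (H.corner g).st := by
  obtain ⟨x, hx⟩ := (isDivisible_of_natDvd_st_corner hls hg hn).exists_mu_eq hkn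
  have hx0 : x ≠ 0 := by
    rintro rfl
    rw [mu_zero, mul_zero] at hx
    exact (mul_pos (by exact_mod_cast hk) (mu_pos hg)).ne' hx.symm
  exact ⟨x, hx0, ofNat_mul_st_corner_eq hls hg hx0 (by omega) hk.ne' hx.symm⟩

lemma rationallyConnected_of_mem_spec {s t : SteinitzNumber} (hs : s ∈ H.Spec)
    (ht : t ∈ H.Spec) : RationallyConnected s t := by
  obtain ⟨h₁, hh₁, rfl⟩ := hs
  obtain ⟨h₂, hh₂, rfl⟩ := ht
  obtain ⟨a, b, ha, hb, hμ⟩ := exists_mul_mu_eq_mul_mu hls hh₁ hh₂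
  exact ⟨b, a, Nat.pos_of_ne_zero hb, Nat.pos_of_ne_zero ha,
    ofNat_mul_st_corner_eq hls hh₁ hh₂ ha hb hμ⟩

lemma mem_spec_of_finDvd {s t : SteinitzNumber} (hs : s ∈ H.Spec) (hts : FinDvd t s) :
    t ∈ H.Spec := by
  obtain ⟨h, hh, rfl⟩ := hs
  obtain ⟨b, hb, hbt⟩ := hts
  obtain ⟨x, hx, hxst⟩ := exists_ofNat_mul_st_corner_eq hls hh hb one_pos hb.1
  rw [ofNat_one_mul, ← hbt] at hxst
  exact ⟨x, hx, ofNat_mul_left_cancel hxst⟩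

lemma ofNat_mul_mem_spec {s : SteinitzNumber} {n k : ℕ} (hns : ofNat n * s ∈ H.Spec)
    (hk : 1 ≤ k) (hkn : k ≤ n) : ofNat k * s ∈ H.Spec := by
  obtain ⟨g, hg, hgs⟩ := hns
  obtain ⟨x, hx, hxst⟩ :=
    exists_ofNat_mul_st_corner_eq hls hg (hgs ▸ natDvd_ofNat_mul (by omega) s) hk hkn
  rw [hgs, SteinitzNumber.mul_left_comm] at hxst
  exact ⟨x, hx, ofNat_mul_left_cancel hxst⟩

end MeasureAlgebra

theorem spec_saturated_general
    (H : MeasureAlgebra) (hls : H.LocallyStandard) :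
    SteinitzNumber.Saturated H.Spec :=
  ⟨fun _ hs _ ht => MeasureAlgebra.rationallyConnected_of_mem_spec hls hs ht,
    fun _ hs _ hts => MeasureAlgebra.mem_spec_of_finDvd hls hs hts,
    fun _ _ _ hns _ hk hkn => MeasureAlgebra.ofNat_mul_mem_spec hls hns hk hkn⟩

/-- **Lemma 5.** The spectrum of a countable locally standard measure algebra is a
saturated set of Steinitz numbers. -/
theorem spec_saturated
    (H : MeasureAlgebra) (hc : Countable H.carrier) (hls : H.LocallyStandard) :
    SteinitzNumber.Saturated H.Spec :=
  spec_saturated_general H hls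
end
end

section
/- Let (H,μ) be a countable unital locally standard measure algebra and let 0 ≠ h ∈ H. Then every automorphism of the measure algebra (hH, μ) extends to an automorphism of the measure algebra H. -/
open scoped BigOperators

noncomputable section

/-- **Lemma 7(2).** Let `(H, μ)` be a countable unital locally standard measure algebra
and `0 ≠ h ∈ H`. Every automorphism of the measure algebra `(hH, μ)` extends to an
automorphism of the measure algebra `H`. -/
theorem corner_automorphism_extends
    (H : MeasureAlgebra) (hc : Countable H.carrier) (hu : H.Unital)
    (hls : H.LocallyStandard) (h : H.carrier) (hh : h ≠ 0)
    (φ : ↥(H.cornerSubring h) ≃+* ↥(H.cornerSubring h))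
    (hφ : ∀ x : ↥(H.cornerSubring h), H.mu ↑(φ x) = H.mu ↑x) :
    ∃ Φ : H.carrier ≃+* H.carrier, (∀ a, H.mu (Φ a) = H.mu a) ∧
      ∀ x : ↥(H.cornerSubring h), Φ ↑x = ↑(φ x) := by
  classical
  obtain ⟨e, he, -⟩ := hu
  have hhh : h * h = h := H.idem h
  set g : H.carrier := e - h with hg
  have heh : e * h = h := he h
  have hhg : h * g = 0 := by
    rw [hg, mul_sub, hhh, mul_comm, heh, sub_self]
  have hgh : g * h = 0 := by rw [mul_comm]; exact hhg
  have hgg : g * g = g := by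
    rw [hg]
    calc (e - h) * (e - h) = e * (e - h) - h * (e - h) := by rw [sub_mul]
    _ = (e - h) - 0 := by rw [he (e - h), hhg]
    _ = e - h := by rw [sub_zero]
  have swap : ∀ a b c d : H.carrier, (a * b) * (c * d) = (a * c) * (b * d) := by
    intro a b c d
    rw [mul_assoc, mul_assoc, mul_comm b (c * d), mul_assoc, mul_comm d b]
  have hsplit : ∀ x : H.carrier, h * x + g * x = x := by
    intro x
    rw [← add_mul, hg, add_sub_cancel, he]
  have hmem : ∀ x : H.carrier, h * x ∈ H.cornerSubring h := by
    intro x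
    show h * (h * x) = h * x
    rw [← mul_assoc, hhh]
  -- the extension map associated with an automorphism ψ
  let F : (↥(H.cornerSubring h) ≃+* ↥(H.cornerSubring h)) → H.carrier → H.carrier :=
    fun ψ x => (↑(ψ ⟨h * x, hmem x⟩) : H.carrier) + g * x
  have hco : ∀ y : ↥(H.cornerSubring h), h * (y : H.carrier) = y := fun y => y.2
  have hcross : ∀ (y : ↥(H.cornerSubring h)) (x : H.carrier),
      (y : H.carrier) * (g * x) = 0 := by
    intro y x
    rw [← hco y, mul_comm h _, mul_assoc, ← mul_assoc h g x, hhg, zero_mul, mul_zero]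
  have hF_h : ∀ ψ x, h * F ψ x = ↑(ψ ⟨h * x, hmem x⟩) := by
    intro ψ x
    show h * ((↑(ψ ⟨h * x, hmem x⟩) : H.carrier) + g * x) = _
    rw [mul_add, hco, ← mul_assoc, hhg, zero_mul, add_zero]
  have hF_g : ∀ ψ x, g * F ψ x = g * x := by
    intro ψ x
    show g * ((↑(ψ ⟨h * x, hmem x⟩) : H.carrier) + g * x) = g * x
    rw [mul_add, ← hco (ψ ⟨h * x, hmem x⟩), ← mul_assoc, hgh, zero_mul, zero_add,
      ← mul_assoc, hgg]
  have hFF : ∀ (ψ ψ' : ↥(H.cornerSubring h) ≃+* ↥(H.cornerSubring h)),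
      (∀ y, ψ' (ψ y) = y) → ∀ x, F ψ' (F ψ x) = x := by
    intro ψ ψ' hcomp x
    show (↑(ψ' ⟨h * F ψ x, hmem _⟩) : H.carrier) + g * F ψ x = x
    have h1 : (⟨h * F ψ x, hmem _⟩ : ↥(H.cornerSubring h)) = ψ ⟨h * x, hmem x⟩ :=
      Subtype.ext (hF_h ψ x)
    rw [h1, hcomp, hF_g]
    exact hsplit x
  have hmul : ∀ x y, F φ (x * y) = F φ x * F φ y := by
    intro x y
    have hab : (⟨h * x, hmem x⟩ : ↥(H.cornerSubring h)) * ⟨h * y, hmem y⟩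
        = ⟨h * (x * y), hmem _⟩ := by
      apply Subtype.ext
      show (h * x) * (h * y) = h * (x * y)
      rw [swap, hhh]
    have hcross2 : (g * x) * ↑(φ ⟨h * y, hmem y⟩) = 0 := by
      rw [mul_comm]; exact hcross _ _
    have hgxy : (g * x) * (g * y) = g * (x * y) := by
      rw [swap, hgg]
    show (↑(φ ⟨h * (x * y), hmem _⟩) : H.carrier) + g * (x * y)
        = ((↑(φ ⟨h * x, hmem x⟩) : H.carrier) + g * x)
          * ((↑(φ ⟨h * y, hmem y⟩) : H.carrier) + g * y)
    rw [add_mul, mul_add, mul_add, hcross, hcross2, add_zero, zero_add, hgxy,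
      ← hab, map_mul]
    rfl
  have hadd : ∀ x y, F φ (x + y) = F φ x + F φ y := by
    intro x y
    have hab : (⟨h * (x + y), hmem _⟩ : ↥(H.cornerSubring h))
        = ⟨h * x, hmem x⟩ + ⟨h * y, hmem y⟩ := by
      apply Subtype.ext
      show h * (x + y) = h * x + h * y
      rw [mul_add]
    show (↑(φ ⟨h * (x + y), hmem _⟩) : H.carrier) + g * (x + y) = F φ x + F φ y
    rw [hab, map_add, mul_add]
    show (↑(φ ⟨h * x, hmem x⟩) + ↑(φ ⟨h * y, hmem y⟩) : H.carrier) + (g * x + g * y)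
        = ((↑(φ ⟨h * x, hmem x⟩) : H.carrier) + g * x)
          + ((↑(φ ⟨h * y, hmem y⟩) : H.carrier) + g * y)
    abel
  refine ⟨⟨⟨F φ, F φ.symm, fun x => hFF φ φ.symm (fun y => φ.symm_apply_apply y) x,
    fun x => hFF φ.symm φ (fun y => φ.apply_symm_apply y) x⟩, hmul, hadd⟩, ?_, ?_⟩
  · intro a
    have h1 : (↑(φ ⟨h * a, hmem a⟩) : H.carrier) * (g * a) = 0 := hcross _ _
    have h2 : (h * a) * (g * a) = 0 := by
      rw [swap, hhg, zero_mul]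
    show H.mu ((↑(φ ⟨h * a, hmem a⟩) : H.carrier) + g * a) = H.mu a
    rw [H.mu_add _ _ h1, hφ]
    conv_rhs => rw [← hsplit a]
    rw [H.mu_add _ _ h2]
  · intro x
    show (↑(φ ⟨h * (x : H.carrier), hmem _⟩) : H.carrier) + g * (x : H.carrier) = ↑(φ x)
    have h1 : (⟨h * (x : H.carrier), hmem _⟩ : ↥(H.cornerSubring h)) = x :=
      Subtype.ext x.2
    have h2 : g * (x : H.carrier) = 0 := by
      rw [← hco x, ← mul_assoc, hgh, zero_mul]
    rw [h1, h2, add_zero]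
end
end
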